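/- arXiv:1201.0256 — 4 statements merged into one kernel-verified Lean document; each statement's English description precedes it below -/
import Mathlib

section
/- Let D₁, D₂ ⊆ ℝᵐ be open and y : D₁ → ℝⁿ, z : D₂ → ℝⁿ be solutions of the PDE system ∂x/∂t^α = X_α(t,x) with C¹ right-hand sides. If D₁ ∩ D₂ is connected and y(t₀) = z(t₀) for some t₀ ∈ D₁ ∩ D₂, then y = z on D₁ ∩ D₂. -/
/-!
Write the system as `dF(t) = A(t, F(t))`, where `A(t, x)` is the linear map sending the basis
vector `eₐ` to `Xₐ(t, x)`; since the `Xₐ` are `C¹`, `A` is locally Lipschitz. Along a segment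
`u ↦ t₀ + u • (t - t₀)` such a system becomes an ODE in `u` whose right-hand side is Lipschitz
in the unknown, so two solutions that agree at `t₀` agree on a ball around `t₀`. Thus the set
where `y = z` is open in `D₁ ∩ D₂`; being closed there by continuity, it is everything.
-/

open Set Filter Topology Metric NNReal

section

variable {E F : Type*} [NormedAddCommGroup E] [NormedSpace ℝ E]
  [NormedAddCommGroup F] [NormedSpace ℝ F]

theorem LipschitzOnWith.apply_prodMk_left {A : E × F → E →L[ℝ] F} {K : ℝ≥0} {U : Set (E × F)}
    (hA : LipschitzOnWith K A U) (t w : E) :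
    LipschitzOnWith (‖w‖₊ * K) (fun x => A (t, x) w) {x | (t, x) ∈ U} := by
  refine LipschitzOnWith.of_dist_le_mul fun x hx x' hx' => ?_
  calc dist (A (t, x) w) (A (t, x') w) ≤ ‖A (t, x) - A (t, x')‖ * ‖w‖ := by
        rw [dist_eq_norm, ← sub_apply]
        exact (A (t, x) - A (t, x')).le_opNorm w
    _ ≤ K * dist x x' * ‖w‖ := by
        gcongr
        simpa [← dist_eq_norm, Prod.dist_eq] using hA.dist_le_mul (t, x) hx (t, x') hx'
    _ = ↑(‖w‖₊ * K) * dist x x' := by push_cast; ring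

theorem eqOn_of_hasFDerivAt_of_lipschitzOnWith {A : E × F → E →L[ℝ] F} {K : ℝ≥0}
    {U : Set (E × F)} {s : Set E} {y z : E → F} {t₀ : E} (hA : LipschitzOnWith K A U)
    (hs : Convex ℝ s) (hy : ∀ t ∈ s, HasFDerivAt y (A (t, y t)) t ∧ (t, y t) ∈ U)
    (hz : ∀ t ∈ s, HasFDerivAt z (A (t, z t)) t ∧ (t, z t) ∈ U)
    (ht₀ : t₀ ∈ s) (h₀ : y t₀ = z t₀) : EqOn y z s := by
  intro t ht
  set γ : ℝ → E := fun u => t₀ + u • (t - t₀)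
  have hγs : ∀ u ∈ Icc (0 : ℝ) 1, γ u ∈ s := fun u hu => hs.add_smul_sub_mem ht₀ ht hu
  have hγ' : ∀ u, HasDerivAt γ (t - t₀) u := fun u => by
    simpa only [one_smul] using ((hasDerivAt_id' u).smul_const (t - t₀)).const_add t₀
  have ray : ∀ f : E → F, (∀ t ∈ s, HasFDerivAt f (A (t, f t)) t ∧ (t, f t) ∈ U) →
      ∀ u ∈ Icc (0 : ℝ) 1, HasDerivAt (f ∘ γ) (A (γ u, (f ∘ γ) u) (t - t₀)) u ∧
        (f ∘ γ) u ∈ {x | (γ u, x) ∈ U} := fun f hf u hu =>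
    ⟨(hf (γ u) (hγs u hu)).1.comp_hasDerivAt u (hγ' u), (hf (γ u) (hγs u hu)).2⟩
  have along_ray := ODE_solution_unique_of_mem_Icc_right
    (fun u _ => hA.apply_prodMk_left (γ u) (t - t₀))
    (HasDerivAt.continuousOn fun u hu => (ray y hy u hu).1)
    (fun u hu => (ray y hy u (Ico_subset_Icc_self hu)).1.hasDerivWithinAt)
    (fun u hu => (ray y hy u (Ico_subset_Icc_self hu)).2)
    (HasDerivAt.continuousOn fun u hu => (ray z hz u hu).1)
    (fun u hu => (ray z hz u (Ico_subset_Icc_self hu)).1.hasDerivWithinAt)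
    (fun u hu => (ray z hz u (Ico_subset_Icc_self hu)).2)
    (by simpa [γ] using h₀)
  simpa [γ] using along_ray (right_mem_Icc.2 zero_le_one)

theorem eventuallyEq_of_hasFDerivAt_of_lipschitzOnWith {A : E × F → E →L[ℝ] F} {K : ℝ≥0}
    {U : Set (E × F)} {y z : E → F} {t₀ : E} (hU : U ∈ 𝓝 (t₀, y t₀))
    (hA : LipschitzOnWith K A U) (hy : ∀ᶠ t in 𝓝 t₀, HasFDerivAt y (A (t, y t)) t)
    (hz : ∀ᶠ t in 𝓝 t₀, HasFDerivAt z (A (t, z t)) t) (h₀ : y t₀ = z t₀) :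
    y =ᶠ[𝓝 t₀] z := by
  have graph_mem : ∀ f : E → F, HasFDerivAt f (A (t₀, f t₀)) t₀ → U ∈ 𝓝 (t₀, f t₀) →
      ∀ᶠ t in 𝓝 t₀, (t, f t) ∈ U := fun f hf hU =>
    (continuousAt_id.prodMk hf.continuousAt).preimage_mem_nhds hU
  obtain ⟨δ, hδ, hball⟩ := eventually_nhds_iff_ball.1
    ((hy.and (graph_mem y hy.self_of_nhds hU)).and
      (hz.and (graph_mem z hz.self_of_nhds (h₀ ▸ hU))))
  exact eventuallyEq_of_mem (ball_mem_nhds t₀ hδ) <|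
    eqOn_of_hasFDerivAt_of_lipschitzOnWith hA (convex_ball t₀ δ) (fun t ht => (hball t ht).1)
      (fun t ht => (hball t ht).2) (mem_ball_self hδ) h₀

end

theorem IsPreconnected.eqOn_of_eq_imp_eventuallyEq {X Y : Type*} [TopologicalSpace X]
    [TopologicalSpace Y] [T2Space Y] {s : Set X} {f g : X → Y} (hs : IsPreconnected s)
    (hf : ∀ x ∈ s, ContinuousAt f x) (hg : ∀ x ∈ s, ContinuousAt g x)
    (hloc : ∀ x ∈ s, f x = g x → f =ᶠ[𝓝 x] g) {x₀ : X} (hx₀ : x₀ ∈ s) (h₀ : f x₀ = g x₀) :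
    EqOn f g s := by
  suffices s ⊆ {x | f =ᶠ[𝓝 x] g} from fun x hx => (this hx).self_of_nhds
  refine hs.subset_of_closure_inter_subset isOpen_setOfPred_eventually_nhds
    ⟨x₀, hx₀, hloc x₀ hx₀ h₀⟩ fun x ⟨hx, hxs⟩ => hloc x hxs ?_
  by_contra hne
  obtain ⟨x', hx'ne, hx'eq⟩ :=
    (((hf x hxs).ne_iff_eventually_ne (hg x hxs)).1 hne).and_frequently
      (mem_closure_iff_frequently.1 hx) |>.exists
  exact hx'ne hx'eq.self_of_nhds

theorem hasFDerivAt_piRing_symm_of_fderiv_single {ι F : Type*} [Fintype ι] [DecidableEq ι]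
    [NormedAddCommGroup F] [NormedSpace ℝ F] {f : (ι → ℝ) → F} {t : ι → ℝ} {v : ι → F}
    (hf : DifferentiableAt ℝ f t) (hv : ∀ i, fderiv ℝ f t (Pi.single i 1) = v i) :
    HasFDerivAt f ((ContinuousLinearEquiv.piRing (𝕜 := ℝ) (E := F) ι).symm v) t := by
  convert hf.hasFDerivAt
  rw [ContinuousLinearEquiv.symm_apply_eq]
  exact funext fun i => (hv i).symm

/-- Two solutions of a first-order PDE system with `C¹` right-hand sides, agreeing at one
point of a connected intersection of their domains, agree on the whole intersection. -/
theorem solutions_agree_on_connected_intersection {m n : ℕ}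
    (G : Set ((Fin m → ℝ) × (Fin n → ℝ))) (hG : IsOpen G)
    (X : Fin m → ((Fin m → ℝ) × (Fin n → ℝ)) → (Fin n → ℝ))
    (hX : ∀ α, ContDiffOn ℝ 1 (X α) G)
    (D₁ D₂ : Set (Fin m → ℝ)) (hD₁ : IsOpen D₁) (hD₂ : IsOpen D₂)
    (y z : (Fin m → ℝ) → (Fin n → ℝ))
    (hy : ∀ t ∈ D₁, DifferentiableAt ℝ y t ∧ (t, y t) ∈ G ∧
      ∀ α, fderiv ℝ y t (Pi.single α 1) = X α (t, y t))
    (hz : ∀ t ∈ D₂, DifferentiableAt ℝ z t ∧ (t, z t) ∈ G ∧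
      ∀ α, fderiv ℝ z t (Pi.single α 1) = X α (t, z t))
    (hconn : IsConnected (D₁ ∩ D₂))
    (t₀ : Fin m → ℝ) (ht₀ : t₀ ∈ D₁ ∩ D₂) (h₀ : y t₀ = z t₀) :
    ∀ t ∈ D₁ ∩ D₂, y t = z t := by
  let e : (Fin m → Fin n → ℝ) ≃L[ℝ] (Fin m → ℝ) →L[ℝ] Fin n → ℝ :=
    (ContinuousLinearEquiv.piRing (Fin m)).symm
  let A := fun p => e fun α => X α p
  have hA : ContDiffOn ℝ 1 A G := e.contDiff.comp_contDiffOn (contDiffOn_pi.2 hX)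
  have hyA : ∀ t ∈ D₁, HasFDerivAt y (A (t, y t)) t := fun t ht =>
    hasFDerivAt_piRing_symm_of_fderiv_single (hy t ht).1 (hy t ht).2.2
  have hzA : ∀ t ∈ D₂, HasFDerivAt z (A (t, z t)) t := fun t ht =>
    hasFDerivAt_piRing_symm_of_fderiv_single (hz t ht).1 (hz t ht).2.2
  refine hconn.isPreconnected.eqOn_of_eq_imp_eventuallyEq
    (fun t ht => (hyA t ht.1).continuousAt) (fun t ht => (hzA t ht.2).continuousAt)
    (fun t ht heq => ?_) ht₀ h₀
  obtain ⟨K, U, hU, hAU⟩ := (hA.contDiffAt (hG.mem_nhds (hy t ht.1).2.1)).exists_lipschitzOnWith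
  exact eventuallyEq_of_hasFDerivAt_of_lipschitzOnWith hU hAU
    (eventually_of_mem (hD₁.mem_nhds ht.1) hyA) (eventually_of_mem (hD₂.mem_nhds ht.2) hzA) heq
end

section
/- Fix t₀ ∈ D. The following are equivalent: (i) for every v ∈ ℝⁿ, the family u_{α,v}(s) := N_αᵀ(s) χ(t₀, s)ᵀ v is a control for the system ∂x/∂t^α = M_α(t)x + N_α(t)u_α(t) (i.e., satisfies its complete integrability conditions); (ii) for all α, β: M_α N_β N_βᵀ + (∂N_α/∂s^β) N_αᵀ + N_α (∂N_αᵀ/∂s^β) + N_β N_βᵀ M_αᵀ = M_β N_α N_αᵀ + (∂N_β/∂s^α) N_βᵀ + N_β (∂N_βᵀ/∂s^α) + N_α N_αᵀ M_βᵀ on D. -/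
/-!
Write `ψ(s) = χ(s, t₀)` and `φ(s) = χ(t₀, s)`. For fixed `s`, both `r ↦ χ(r, t₀) χ(t₀, s)` and
`r ↦ χ(r, s)` solve `∂X/∂t^α = M_α X` and agree at `r = t₀`; by Grönwall's inequality along
segments of the convex set `D` they agree at `r = s`, so `ψ φ = 1`. Hence `φ = ψ⁻¹` is `C¹` with
`∂_β φ = -φ M_β`. With `w = φ(s)ᵀ v` the candidate control is `u_α = N_αᵀ w`, with
`∂_β u_α = (∂_β N_α)ᵀ w - N_αᵀ M_βᵀ w`, and the difference of the two sides of the integrability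
condition collapses to `(G_αβ - G_βα) w`, where `G_αβ` is the left-hand side of (ii). As `φ(s)` is
invertible, `w` ranges over all of `ℝⁿ` together with `v`.
-/

open Matrix

attribute [local instance] Matrix.normedAddCommGroup Matrix.normedSpace

/-- `χ` is the fundamental matrix of the system `∂X/∂t^α = M_α(t) X` on `D`. -/
def IsFundamentalMatrix {m n : ℕ} (D : Set (Fin m → ℝ))
    (M : Fin m → (Fin m → ℝ) → Matrix (Fin n) (Fin n) ℝ)
    (χ : (Fin m → ℝ) → (Fin m → ℝ) → Matrix (Fin n) (Fin n) ℝ) : Prop :=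
  ∀ t₀ ∈ D, χ t₀ t₀ = 1 ∧
    ∀ t ∈ D, DifferentiableAt ℝ (fun s => χ s t₀) t ∧
      ∀ α, fderiv ℝ (fun s => χ s t₀) t (Pi.single α 1) = M α t * χ t t₀

/-- `(u_α)` is a control for the system `∂x/∂t^α = M_α(t)x + N_α(t)u_α(t)`:
it is `C¹` and satisfies the complete integrability conditions of the controlled system. -/
def IsControl {m n k : ℕ} (D : Set (Fin m → ℝ))
    (M : Fin m → (Fin m → ℝ) → Matrix (Fin n) (Fin n) ℝ)
    (N : Fin m → (Fin m → ℝ) → Matrix (Fin n) (Fin k) ℝ)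
    (u : Fin m → (Fin m → ℝ) → (Fin k → ℝ)) : Prop :=
  (∀ α, ContDiffOn ℝ 1 (u α) D) ∧
  ∀ t ∈ D, ∀ α β,
    M α t *ᵥ (N β t *ᵥ u β t) + (fderiv ℝ (N α) t (Pi.single β 1)) *ᵥ u α t
      + N α t *ᵥ (fderiv ℝ (u α) t (Pi.single β 1)) =
    M β t *ᵥ (N α t *ᵥ u α t) + (fderiv ℝ (N β) t (Pi.single α 1)) *ᵥ u β t
      + N β t *ᵥ (fderiv ℝ (u β) t (Pi.single α 1))

theorem IsBilinearMap.isBoundedBilinearMap {𝕜 E F G : Type*} [NontriviallyNormedField 𝕜]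
    [CompleteSpace 𝕜] [NormedAddCommGroup E] [NormedSpace 𝕜 E] [FiniteDimensional 𝕜 E]
    [NormedAddCommGroup F] [NormedSpace 𝕜 F] [FiniteDimensional 𝕜 F] [NormedAddCommGroup G]
    [NormedSpace 𝕜 G] {f : E → F → G} (hf : IsBilinearMap 𝕜 f) :
    IsBoundedBilinearMap 𝕜 (fun x : E × F => f x.1 x.2) :=
  hf.toContinuousBilinearMap.isBoundedBilinearMap

section MatrixInverse

variable {𝕜 : Type*} [NontriviallyNormedField 𝕜] {ι q : Type*} [Fintype ι] [DecidableEq ι]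
  [Fintype q] {n : WithTop ℕ∞}

theorem contDiff_det : ContDiff 𝕜 n (fun A : Matrix ι ι 𝕜 => A.det) := by
  simp only [Matrix.det_apply']
  fun_prop

theorem contDiff_updateRow (j : ι) (w : q → 𝕜) :
    ContDiff 𝕜 n (fun A : Matrix ι q 𝕜 => A.updateRow j w) := by
  refine contDiff_pi.2 fun i => ?_
  rcases eq_or_ne i j with rfl | h
  · simpa using contDiff_const
  · simp only [updateRow_ne h]
    exact contDiff_pi.1 (contDiff_id (E := Matrix ι q 𝕜)) i

theorem contDiff_adjugate : ContDiff 𝕜 n (fun A : Matrix ι ι 𝕜 => A.adjugate) := by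
  refine contDiff_pi.2 fun i => contDiff_pi.2 fun j => ?_
  simp only [Matrix.adjugate_apply]
  exact contDiff_det.comp (contDiff_updateRow j _)

theorem contDiffAt_matrix_inv {A : Matrix ι ι 𝕜} (hA : IsUnit A.det) :
    ContDiffAt 𝕜 n (fun B : Matrix ι ι 𝕜 => B⁻¹) A := by
  simp only [Matrix.inv_def, Ring.inverse_eq_inv']
  exact (contDiff_det.contDiffAt.inv hA.ne_zero).smul contDiff_adjugate.contDiffAt

end MatrixInverse

section MatrixCalculus

variable {𝕜 : Type*} [NontriviallyNormedField 𝕜] [CompleteSpace 𝕜]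
  {p q r : Type*} [Fintype p] [Fintype q] [Fintype r]

theorem isBoundedBilinearMap_matrix_mul :
    IsBoundedBilinearMap 𝕜 (fun x : Matrix p q 𝕜 × Matrix q r 𝕜 => x.1 * x.2) :=
  IsBilinearMap.isBoundedBilinearMap
    ⟨Matrix.add_mul, Matrix.smul_mul, Matrix.mul_add, fun c A B => Matrix.mul_smul A c B⟩

theorem isBoundedBilinearMap_vecMul :
    IsBoundedBilinearMap 𝕜 (fun x : (p → 𝕜) × Matrix p q 𝕜 => x.1 ᵥ* x.2) :=
  IsBilinearMap.isBoundedBilinearMap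
    ⟨fun v w A => add_vecMul A v w, smul_vecMul, fun v A B => vecMul_add A B v,
      fun c v A => vecMul_smul v c A⟩

theorem ContinuousOn.matrix_mul {X : Type*} [TopologicalSpace X] {f : X → Matrix p q 𝕜}
    {g : X → Matrix q r 𝕜} {s : Set X} (hf : ContinuousOn f s) (hg : ContinuousOn g s) :
    ContinuousOn (fun y => f y * g y) s :=
  (isBoundedBilinearMap_matrix_mul.continuous.comp_continuousOn (hf.prodMk hg) :)

variable {E : Type*} [NormedAddCommGroup E] [NormedSpace 𝕜 E]
  {f : E → Matrix p q 𝕜} {g : E → Matrix q r 𝕜} {x : E} {s : Set E}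

theorem ContDiffOn.matrix_mul {n : WithTop ℕ∞} (hf : ContDiffOn 𝕜 n f s)
    (hg : ContDiffOn 𝕜 n g s) : ContDiffOn 𝕜 n (fun y => f y * g y) s :=
  (isBoundedBilinearMap_matrix_mul.contDiff.comp_contDiffOn (hf.prodMk hg) :)

theorem DifferentiableAt.matrix_mul (hf : DifferentiableAt 𝕜 f x) (hg : DifferentiableAt 𝕜 g x) :
    DifferentiableAt 𝕜 (fun y => f y * g y) x :=
  ((isBoundedBilinearMap_matrix_mul.differentiableAt (f x, g x)).comp x (hf.prodMk hg) :)

theorem fderiv_matrix_mul_apply (hf : DifferentiableAt 𝕜 f x) (hg : DifferentiableAt 𝕜 g x)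
    (w : E) : fderiv 𝕜 (fun y => f y * g y) x w = fderiv 𝕜 f x w * g x + f x * fderiv 𝕜 g x w := by
  -- `fderiv` carries the product topology of `Matrix`, the bilinear-map lemmas the topology of
  -- the entrywise norm; they agree only after unfolding, hence the ascription and the `rfl`.
  have h : HasFDerivAt (fun y => f y * g y) _ x :=
    ((isBoundedBilinearMap_matrix_mul.hasFDerivAt (f x, g x)).comp x
      (hf.hasFDerivAt.prodMk hg.hasFDerivAt) :)
  rw [h.fderiv, add_comm]
  rfl

theorem ContDiffOn.const_vecMul {n : WithTop ℕ∞} (v : p → 𝕜) (hf : ContDiffOn 𝕜 n f s) :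
    ContDiffOn 𝕜 n (fun y => v ᵥ* f y) s :=
  ((isBoundedBilinearMap_vecMul.isBoundedLinearMap_right v).contDiff.comp_contDiffOn hf :)

theorem fderiv_const_vecMul_apply (v : p → 𝕜) (hf : DifferentiableAt 𝕜 f x) (w : E) :
    fderiv 𝕜 (fun y => v ᵥ* f y) x w = v ᵥ* fderiv 𝕜 f x w := by
  have h : HasFDerivAt (fun y => v ᵥ* f y) _ x :=
    ((isBoundedBilinearMap_vecMul.isBoundedLinearMap_right v).hasFDerivAt.comp x hf.hasFDerivAt :)
  rw [h.fderiv]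
  rfl

end MatrixCalculus

section Partials

variable {𝕜 ι F : Type*} [Fintype ι] [DecidableEq ι]

theorem ContinuousLinearMap.apply_eq_sum_smul_apply_single [Semiring 𝕜] [TopologicalSpace 𝕜]
    [AddCommMonoid F] [Module 𝕜 F] [TopologicalSpace F] (L : (ι → 𝕜) →L[𝕜] F) (w : ι → 𝕜) :
    L w = ∑ i, w i • L (Pi.single i 1) := by
  conv_lhs => rw [pi_eq_sum_univ' w]
  simp only [map_sum, map_smul]

theorem contDiffOn_one_of_continuousOn_fderiv_single [NontriviallyNormedField 𝕜]
    [CompleteSpace 𝕜] [NormedAddCommGroup F] [NormedSpace 𝕜 F] {f : (ι → 𝕜) → F}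
    {D : Set (ι → 𝕜)} (hD : IsOpen D) (hf : DifferentiableOn 𝕜 f D)
    (hf' : ∀ i, ContinuousOn (fun t => fderiv 𝕜 f t (Pi.single i 1)) D) :
    ContDiffOn 𝕜 1 f D := by
  rw [show (1 : WithTop ℕ∞) = 0 + 1 from rfl, contDiffOn_succ_iff_fderiv_of_isOpen hD,
    contDiffOn_zero]
  refine ⟨hf, by simp, continuousOn_clm_apply.2 fun w => ?_⟩
  simp only [ContinuousLinearMap.apply_eq_sum_smul_apply_single _ w]
  exact continuousOn_finsetSum _ fun i _ => (hf' i).const_smul (w i)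

end Partials

section LinearSystem

variable {p q : Type*} [Fintype p] [Fintype q]

theorem eq_zero_of_hasDerivAt_mul {A : ℝ → Matrix p p ℝ} {y : ℝ → Matrix p q ℝ} {a b : ℝ}
    (hA : ContinuousOn A (Set.Icc a b)) (hy : ∀ τ ∈ Set.Icc a b, HasDerivAt y (A τ * y τ) τ)
    (ha : y a = 0) : ∀ τ ∈ Set.Icc a b, y τ = 0 := by
  obtain ⟨K, hK⟩ := isCompact_Icc.exists_bound_of_continuousOn hA
  obtain ⟨C, hC₀, hC⟩ := isBoundedBilinearMap_matrix_mul.bound (𝕜 := ℝ) (E := Matrix p p ℝ)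
    (F := Matrix p q ℝ)
  refine eq_zero_of_abs_deriv_le_mul_abs_self_of_eq_zero_right (K := C * K)
    (fun τ hτ => (hy τ hτ).continuousAt.continuousWithinAt)
    (fun τ hτ => (hy τ (Set.Ico_subset_Icc_self hτ)).hasDerivWithinAt) ha fun τ hτ => ?_
  calc ‖A τ * y τ‖ ≤ C * ‖A τ‖ * ‖y τ‖ := hC _ _
    _ ≤ C * K * ‖y τ‖ := by gcongr; exact hK τ (Set.Ico_subset_Icc_self hτ)

variable {ι : Type*} [Fintype ι] [DecidableEq ι]

theorem Convex.eqOn_of_fderiv_single_eq_mul {D : Set (ι → ℝ)} (hD : Convex ℝ D)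
    {M : ι → (ι → ℝ) → Matrix p p ℝ} (hM : ∀ i, ContinuousOn (M i) D)
    {Y Z : (ι → ℝ) → Matrix p q ℝ}
    (hY : ∀ t ∈ D, DifferentiableAt ℝ Y t) (hZ : ∀ t ∈ D, DifferentiableAt ℝ Z t)
    (hY' : ∀ t ∈ D, ∀ i, fderiv ℝ Y t (Pi.single i 1) = M i t * Y t)
    (hZ' : ∀ t ∈ D, ∀ i, fderiv ℝ Z t (Pi.single i 1) = M i t * Z t)
    {c : ι → ℝ} (hc : c ∈ D) (hYZ : Y c = Z c) : Set.EqOn Y Z D := by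
  intro s hs
  set γ : ℝ → ι → ℝ := ⇑(AffineMap.lineMap (k := ℝ) c s)
  have hγ : ∀ τ ∈ Set.Icc (0 : ℝ) 1, γ τ ∈ D := fun τ hτ => hD.lineMap_mem hc hs hτ
  set A : ℝ → Matrix p p ℝ := fun τ => ∑ i, (s - c) i • M i (γ τ)
  have hMγ : ∀ i, ContinuousOn (fun τ => M i (γ τ)) (Set.Icc 0 1) := fun i =>
    (hM i).comp AffineMap.lineMap_continuous.continuousOn hγ
  have hA : ContinuousOn A (Set.Icc 0 1) :=
    continuousOn_finsetSum _ fun i _ => (hMγ i).const_smul ((s - c) i)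
  have hderiv : ∀ τ ∈ Set.Icc (0 : ℝ) 1,
      HasDerivAt (fun τ => Y (γ τ) - Z (γ τ)) (A τ * (Y (γ τ) - Z (γ τ))) τ := by
    intro τ hτ
    have h : HasDerivAt (fun τ => Y (γ τ) - Z (γ τ))
        (fderiv ℝ Y (γ τ) (s - c) - fderiv ℝ Z (γ τ) (s - c)) τ :=
      ((hY _ (hγ τ hτ)).hasFDerivAt.sub (hZ _ (hγ τ hτ)).hasFDerivAt).comp_hasDerivAt τ
        AffineMap.hasDerivAt_lineMap
    convert h using 1
    simp only [ContinuousLinearMap.apply_eq_sum_smul_apply_single _ (s - c), hY' _ (hγ τ hτ),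
      hZ' _ (hγ τ hτ), A, Matrix.sum_mul, ← Finset.sum_sub_distrib, Matrix.smul_mul,
      Matrix.mul_sub]
  have h := eq_zero_of_hasDerivAt_mul hA hderiv (by simp [γ, hYZ]) 1 (by simp)
  simpa [γ, sub_eq_zero] using h

end LinearSystem

section Gramian

variable {p q : Type*} [Fintype p] [Fintype q]

/-- The left-hand side `G_αβ` of condition (ii), with `Pα` standing for `∂N_α/∂s^β`. -/
def gramianForm (Mα : Matrix p p ℝ) (Nα Nβ Pα : Matrix p q ℝ) : Matrix p p ℝ :=
  Mα * (Nβ * Nβᵀ) + Pα * Nαᵀ + Nα * Pαᵀ + Nβ * Nβᵀ * Mαᵀ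

theorem gramianForm_sub_mulVec (Mα Mβ : Matrix p p ℝ) (Nα Nβ Pα Pβ : Matrix p q ℝ)
    (w : p → ℝ) :
    (gramianForm Mα Nα Nβ Pα - gramianForm Mβ Nβ Nα Pβ) *ᵥ w =
      (Mα *ᵥ (Nβ *ᵥ (w ᵥ* Nβ)) + Pα *ᵥ (w ᵥ* Nα) + Nα *ᵥ (w ᵥ* (Pα - Mβ * Nα))) -
      (Mβ *ᵥ (Nα *ᵥ (w ᵥ* Nα)) + Pβ *ᵥ (w ᵥ* Nβ) + Nβ *ᵥ (w ᵥ* (Pβ - Mα * Nβ))) := by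
  simp only [gramianForm, ← mulVec_transpose, sub_mulVec, add_mulVec, mulVec_sub, mulVec_mulVec,
    transpose_sub, transpose_mul, Matrix.mul_assoc]
  abel

end Gramian

namespace IsFundamentalMatrix

variable {m n : ℕ} {D : Set (Fin m → ℝ)} {M : Fin m → (Fin m → ℝ) → Matrix (Fin n) (Fin n) ℝ}
  {χ : (Fin m → ℝ) → (Fin m → ℝ) → Matrix (Fin n) (Fin n) ℝ} {t₀ : Fin m → ℝ}

theorem apply_self (hχ : IsFundamentalMatrix D M χ) (ht₀ : t₀ ∈ D) : χ t₀ t₀ = 1 :=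
  (hχ t₀ ht₀).1

theorem differentiableAt (hχ : IsFundamentalMatrix D M χ) (ht₀ : t₀ ∈ D) {t : Fin m → ℝ}
    (ht : t ∈ D) : DifferentiableAt ℝ (fun s => χ s t₀) t :=
  ((hχ t₀ ht₀).2 t ht).1

theorem fderiv_apply (hχ : IsFundamentalMatrix D M χ) (ht₀ : t₀ ∈ D) {t : Fin m → ℝ}
    (ht : t ∈ D) (α : Fin m) :
    fderiv ℝ (fun s => χ s t₀) t (Pi.single α 1) = M α t * χ t t₀ :=
  ((hχ t₀ ht₀).2 t ht).2 α

theorem mul_swap_eq_one (hχ : IsFundamentalMatrix D M χ) (hconv : Convex ℝ D)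
    (hM : ∀ α, ContinuousOn (M α) D) (ht₀ : t₀ ∈ D) {s : Fin m → ℝ} (hs : s ∈ D) :
    χ s t₀ * χ t₀ s = 1 := by
  have key := hconv.eqOn_of_fderiv_single_eq_mul hM
    (Y := fun r => χ r t₀ * χ t₀ s) (Z := fun r => χ r s)
    (fun t ht => (hχ.differentiableAt ht₀ ht).matrix_mul (differentiableAt_const _))
    (fun t ht => hχ.differentiableAt hs ht)
    (fun t ht α => by
      rw [fderiv_matrix_mul_apply (hχ.differentiableAt ht₀ ht) (differentiableAt_const _),
        hχ.fderiv_apply ht₀ ht]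
      simp [Matrix.mul_assoc])
    (fun t ht => hχ.fderiv_apply hs ht) ht₀ (by simp [hχ.apply_self ht₀]) hs
  simpa [hχ.apply_self hs] using key

theorem swap_mul_eq_one (hχ : IsFundamentalMatrix D M χ) (hconv : Convex ℝ D)
    (hM : ∀ α, ContinuousOn (M α) D) (ht₀ : t₀ ∈ D) {s : Fin m → ℝ} (hs : s ∈ D) :
    χ t₀ s * χ s t₀ = 1 :=
  mul_eq_one_comm.1 (hχ.mul_swap_eq_one hconv hM ht₀ hs)

theorem contDiffOn (hχ : IsFundamentalMatrix D M χ) (hD : IsOpen D)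
    (hM : ∀ α, ContinuousOn (M α) D) (ht₀ : t₀ ∈ D) :
    ContDiffOn ℝ 1 (fun s => χ s t₀) D := by
  refine contDiffOn_one_of_continuousOn_fderiv_single hD
    (fun t ht => (hχ.differentiableAt ht₀ ht).differentiableWithinAt) fun α => ?_
  refine ((hM α).matrix_mul fun t ht => ?_).congr fun t ht => hχ.fderiv_apply ht₀ ht α
  exact (hχ.differentiableAt ht₀ ht).continuousAt.continuousWithinAt

theorem contDiffOn_swap (hχ : IsFundamentalMatrix D M χ) (hD : IsOpen D) (hconv : Convex ℝ D)
    (hM : ∀ α, ContinuousOn (M α) D) (ht₀ : t₀ ∈ D) :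
    ContDiffOn ℝ 1 (fun s => χ t₀ s) D := by
  refine ContDiffOn.congr (f := fun s => (χ s t₀)⁻¹) (fun t ht => ?_) fun s hs =>
    (inv_eq_right_inv (hχ.mul_swap_eq_one hconv hM ht₀ hs)).symm
  exact (contDiffAt_matrix_inv (isUnit_det_of_right_inverse
    (hχ.mul_swap_eq_one hconv hM ht₀ ht))).comp_contDiffWithinAt t (hχ.contDiffOn hD hM ht₀ t ht)

theorem differentiableAt_swap (hχ : IsFundamentalMatrix D M χ) (hD : IsOpen D)
    (hconv : Convex ℝ D) (hM : ∀ α, ContinuousOn (M α) D) (ht₀ : t₀ ∈ D) {t : Fin m → ℝ}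
    (ht : t ∈ D) : DifferentiableAt ℝ (fun s => χ t₀ s) t :=
  ((hχ.contDiffOn_swap hD hconv hM ht₀).differentiableOn one_ne_zero t ht).differentiableAt
    (hD.mem_nhds ht)

theorem fderiv_swap_apply (hχ : IsFundamentalMatrix D M χ) (hD : IsOpen D) (hconv : Convex ℝ D)
    (hM : ∀ α, ContinuousOn (M α) D) (ht₀ : t₀ ∈ D) {t : Fin m → ℝ} (ht : t ∈ D) (β : Fin m) :
    fderiv ℝ (fun s => χ t₀ s) t (Pi.single β 1) = -(χ t₀ t * M β t) := by
  have hconst : fderiv ℝ (fun s => χ t₀ s * χ s t₀) t = 0 := by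
    rw [Filter.EventuallyEq.fderiv_eq (f := fun _ => (1 : Matrix (Fin n) (Fin n) ℝ)),
      fderiv_const_apply]
    filter_upwards [hD.mem_nhds ht] with s hs using hχ.swap_mul_eq_one hconv hM ht₀ hs
  have h := congrArg (fun L => L (Pi.single β 1) * χ t₀ t) hconst
  simp only [fderiv_matrix_mul_apply (hχ.differentiableAt_swap hD hconv hM ht₀ ht)
    (hχ.differentiableAt ht₀ ht), hχ.fderiv_apply ht₀ ht, Matrix.add_mul, Matrix.mul_assoc,
    hχ.mul_swap_eq_one hconv hM ht₀ ht, Matrix.mul_one] at h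
  exact eq_neg_of_add_eq_zero_left (by simpa using h)

variable {k : ℕ} {N : Fin m → (Fin m → ℝ) → Matrix (Fin n) (Fin k) ℝ}

theorem fderiv_control_apply (hχ : IsFundamentalMatrix D M χ) (hD : IsOpen D)
    (hconv : Convex ℝ D) (hM : ∀ α, ContinuousOn (M α) D) (hN : ∀ α, ContDiffOn ℝ 1 (N α) D)
    (ht₀ : t₀ ∈ D) (v : Fin n → ℝ) {t : Fin m → ℝ} (ht : t ∈ D) (α β : Fin m) :
    fderiv ℝ (fun s => v ᵥ* (χ t₀ s * N α s)) t (Pi.single β 1) =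
      (v ᵥ* χ t₀ t) ᵥ* (fderiv ℝ (N α) t (Pi.single β 1) - M β t * N α t) := by
  have hφ := hχ.differentiableAt_swap hD hconv hM ht₀ ht
  have hN' : DifferentiableAt ℝ (N α) t :=
    (((hN α).differentiableOn one_ne_zero) t ht).differentiableAt (hD.mem_nhds ht)
  rw [fderiv_const_vecMul_apply _ (hφ.matrix_mul hN'), fderiv_matrix_mul_apply hφ hN',
    hχ.fderiv_swap_apply hD hconv hM ht₀ ht, vecMul_vecMul, Matrix.mul_sub, sub_eq_neg_add,
    Matrix.neg_mul, Matrix.mul_assoc]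

theorem isControl_iff (hχ : IsFundamentalMatrix D M χ) (hD : IsOpen D)
    (hconv : Convex ℝ D) (hM : ∀ α, ContinuousOn (M α) D) (hN : ∀ α, ContDiffOn ℝ 1 (N α) D)
    (ht₀ : t₀ ∈ D) (v : Fin n → ℝ) :
    IsControl D M N (fun α s => v ᵥ* (χ t₀ s * N α s)) ↔
      ∀ t ∈ D, ∀ α β,
        gramianForm (M α t) (N α t) (N β t) (fderiv ℝ (N α) t (Pi.single β 1)) *ᵥ (v ᵥ* χ t₀ t) =
        gramianForm (M β t) (N β t) (N α t) (fderiv ℝ (N β) t (Pi.single α 1)) *ᵥ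
          (v ᵥ* χ t₀ t) := by
  refine (and_iff_right fun α => ((hχ.contDiffOn_swap hD hconv hM ht₀).matrix_mul
    (hN α)).const_vecMul v).trans (forall₂_congr fun t ht => forall₂_congr fun α β => ?_)
  dsimp only
  rw [hχ.fderiv_control_apply hD hconv hM hN ht₀ v ht α β,
    hχ.fderiv_control_apply hD hconv hM hN ht₀ v ht β α, ← vecMul_vecMul, ← vecMul_vecMul,
    ← sub_eq_zero, ← gramianForm_sub_mulVec, sub_mulVec, sub_eq_zero]

end IsFundamentalMatrix

theorem gramian_controls_iff_general {m n k : ℕ} (D : Set (Fin m → ℝ))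
    (hD : IsOpen D) (hconv : Convex ℝ D)
    (M : Fin m → (Fin m → ℝ) → Matrix (Fin n) (Fin n) ℝ)
    (hM : ∀ α, ContDiffOn ℝ 1 (M α) D)
    (N : Fin m → (Fin m → ℝ) → Matrix (Fin n) (Fin k) ℝ)
    (hN : ∀ α, ContDiffOn ℝ 1 (N α) D)
    (χ : (Fin m → ℝ) → (Fin m → ℝ) → Matrix (Fin n) (Fin n) ℝ)
    (hχ : IsFundamentalMatrix D M χ)
    (t₀ : Fin m → ℝ) (ht₀ : t₀ ∈ D) :
    (∀ v : Fin n → ℝ,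
      IsControl D M N (fun α s => (N α s)ᵀ *ᵥ ((χ t₀ s)ᵀ *ᵥ v)))
    ↔
    (∀ s ∈ D, ∀ α β,
      M α s * (N β s * (N β s)ᵀ) + fderiv ℝ (N α) s (Pi.single β 1) * (N α s)ᵀ
        + N α s * (fderiv ℝ (N α) s (Pi.single β 1))ᵀ
        + N β s * (N β s)ᵀ * (M α s)ᵀ =
      M β s * (N α s * (N α s)ᵀ) + fderiv ℝ (N β) s (Pi.single α 1) * (N β s)ᵀ
        + N β s * (fderiv ℝ (N β) s (Pi.single α 1))ᵀ
        + N α s * (N α s)ᵀ * (M β s)ᵀ) := by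
  have hMc : ∀ α, ContinuousOn (M α) D := fun α => (hM α).continuousOn
  have hu : ∀ v : Fin n → ℝ, (fun α s => (N α s)ᵀ *ᵥ ((χ t₀ s)ᵀ *ᵥ v)) =
      fun α s => v ᵥ* (χ t₀ s * N α s) := fun v => by
    ext α s
    rw [mulVec_mulVec, ← transpose_mul, mulVec_transpose]
  simp only [hu, hχ.isControl_iff hD hconv hMc hN ht₀]
  constructor
  · intro h s hs α β
    refine ext_iff_mulVec.2 fun w => ?_
    have hw := h (w ᵥ* χ s t₀) s hs α β
    rwa [vecMul_vecMul, hχ.mul_swap_eq_one hconv hMc ht₀ hs, vecMul_one] at hw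
  · intro h v t ht α β
    exact congrArg (· *ᵥ (v ᵥ* χ t₀ t)) (h t ht α β)

/-- For fixed `t₀ ∈ D`, the families `u_{α,v}(s) = N_αᵀ(s) χ(t₀,s)ᵀ v` are controls for
every `v ∈ ℝⁿ` if and only if the gramian conditions (14) hold on `D`. -/
theorem gramian_controls_iff {m n k : ℕ} (D : Set (Fin m → ℝ))
    (hD : IsOpen D) (hconv : Convex ℝ D)
    (M : Fin m → (Fin m → ℝ) → Matrix (Fin n) (Fin n) ℝ)
    (hM : ∀ α, ContDiffOn ℝ 1 (M α) D)
    (hMI : ∀ t ∈ D, ∀ α β,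
      fderiv ℝ (M α) t (Pi.single β 1) + M α t * M β t =
      fderiv ℝ (M β) t (Pi.single α 1) + M β t * M α t)
    (N : Fin m → (Fin m → ℝ) → Matrix (Fin n) (Fin k) ℝ)
    (hN : ∀ α, ContDiffOn ℝ 1 (N α) D)
    (χ : (Fin m → ℝ) → (Fin m → ℝ) → Matrix (Fin n) (Fin n) ℝ)
    (hχ : IsFundamentalMatrix D M χ)
    (t₀ : Fin m → ℝ) (ht₀ : t₀ ∈ D) :
    (∀ v : Fin n → ℝ,
      IsControl D M N (fun α s => (N α s)ᵀ *ᵥ ((χ t₀ s)ᵀ *ᵥ v)))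
    ↔
    (∀ s ∈ D, ∀ α β,
      M α s * (N β s * (N β s)ᵀ) + fderiv ℝ (N α) s (Pi.single β 1) * (N α s)ᵀ
        + N α s * (fderiv ℝ (N α) s (Pi.single β 1))ᵀ
        + N β s * (N β s)ᵀ * (M α s)ᵀ =
      M β s * (N α s * (N α s)ᵀ) + fderiv ℝ (N β) s (Pi.single α 1) * (N β s)ᵀ
        + N β s * (fderiv ℝ (N β) s (Pi.single α 1))ᵀ
        + N α s * (N α s)ᵀ * (M β s)ᵀ) :=
  gramian_controls_iff_general D hD hconv M hM N hN χ hχ t₀ ht₀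
end

section
/- The reachability gramian and controllability gramian satisfy ℛ(t₀, t) = −𝒞(t, t₀) and χ(t, t₀) 𝒞(t₀, t) χ(t, t₀)ᵀ = −𝒞(t, t₀) for all t₀, t ∈ D; consequently 𝒞(t₀, t), 𝒞(t, t₀), ℛ(t₀, t), ℛ(t, t₀) all have the same rank. -/
open Matrix MeasureTheory

attribute [local instance] Matrix.normedAddCommGroup Matrix.normedSpace

noncomputable section

/-- The segment from `t₀` to `t`, parametrized on `[0,1]`. -/
def seg {m : ℕ} (t₀ t : Fin m → ℝ) (τ : ℝ) : Fin m → ℝ := t₀ + τ • (t - t₀)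

/-- The controllability gramian
`𝒞(t₀,t) = ∫_{γ_{t₀,t}} χ(t₀,s) N_α(s) N_αᵀ(s) χ(t₀,s)ᵀ ds^α`, computed along the
segment from `t₀` to `t` (by path independence this is the general value). -/
def ctrlGramian {m n k : ℕ}
    (χ : (Fin m → ℝ) → (Fin m → ℝ) → Matrix (Fin n) (Fin n) ℝ)
    (N : Fin m → (Fin m → ℝ) → Matrix (Fin n) (Fin k) ℝ)
    (t₀ t : Fin m → ℝ) : Matrix (Fin n) (Fin n) ℝ :=
  fun i j => ∫ τ in (0:ℝ)..1, ∑ α, (t α - t₀ α) *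
    (χ t₀ (seg t₀ t τ) * N α (seg t₀ t τ) * (N α (seg t₀ t τ))ᵀ
      * (χ t₀ (seg t₀ t τ))ᵀ) i j

/-- The reachability gramian
`ℛ(t₀,t) = ∫_{γ_{t₀,t}} χ(t,s) N_α(s) N_αᵀ(s) χ(t,s)ᵀ ds^α`. -/
def reachGramian {m n k : ℕ}
    (χ : (Fin m → ℝ) → (Fin m → ℝ) → Matrix (Fin n) (Fin n) ℝ)
    (N : Fin m → (Fin m → ℝ) → Matrix (Fin n) (Fin k) ℝ)
    (t₀ t : Fin m → ℝ) : Matrix (Fin n) (Fin n) ℝ :=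
  fun i j => ∫ τ in (0:ℝ)..1, ∑ α, (t α - t₀ α) *
    (χ t (seg t₀ t τ) * N α (seg t₀ t τ) * (N α (seg t₀ t τ))ᵀ
      * (χ t (seg t₀ t τ))ᵀ) i j

/-!
The fundamental matrix is a cocycle, `χ(c, b) χ(b, a) = χ(c, a)`: along the segment from `b` to
`c` both sides solve the same linear ODE with the same initial value. Hence
`χ(t, s) = χ(t, t₀) χ(t₀, s)` inside the integral, which turns `χ(t, t₀) 𝒞(t₀, t) χ(t, t₀)ᵀ` into
`ℛ(t₀, t)`, while the substitution `τ ↦ 1 - τ` reverses the segment and gives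
`ℛ(t₀, t) = -𝒞(t, t₀)`. The rank statements follow because `χ(t, t₀)` is invertible.
-/

open Set

theorem eqOn_Icc_of_hasDerivAt_clm {E : Type*} [NormedAddCommGroup E] [NormedSpace ℝ E]
    {a b : ℝ} {A : ℝ → E →L[ℝ] E} (hA : ContinuousOn A (Icc a b)) {f g : ℝ → E}
    (hf : ∀ τ ∈ Icc a b, HasDerivAt f (A τ (f τ)) τ)
    (hg : ∀ τ ∈ Icc a b, HasDerivAt g (A τ (g τ)) τ) (ha : f a = g a) :
    EqOn f g (Icc a b) := by
  obtain ⟨C, hC⟩ := isCompact_Icc.exists_bound_of_continuousOn hA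
  have hlip : ∀ τ ∈ Ico a b, LipschitzOnWith (Real.toNNReal C) (A τ) univ := fun τ hτ =>
    ((A τ).lipschitz.weaken (by
      rw [← NNReal.coe_le_coe, coe_nnnorm]
      exact (hC τ (Ico_subset_Icc_self hτ)).trans (Real.le_coe_toNNReal C))).lipschitzOnWith
  exact ODE_solution_unique_of_mem_Icc_right hlip
    (fun τ hτ => (hf τ hτ).continuousAt.continuousWithinAt)
    (fun τ hτ => (hf τ (Ico_subset_Icc_self hτ)).hasDerivWithinAt) (fun _ _ => mem_univ _)
    (fun τ hτ => (hg τ hτ).continuousAt.continuousWithinAt)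
    (fun τ hτ => (hg τ (Ico_subset_Icc_self hτ)).hasDerivWithinAt) (fun _ _ => mem_univ _) ha

theorem Matrix.eqOn_Icc_of_hasDerivAt_mul {ι : Type*} [Fintype ι] {a b : ℝ}
    {B : ℝ → Matrix ι ι ℝ} (hB : ContinuousOn B (Icc a b)) {f g : ℝ → Matrix ι ι ℝ}
    (hf : ∀ τ ∈ Icc a b, HasDerivAt f (B τ * f τ) τ)
    (hg : ∀ τ ∈ Icc a b, HasDerivAt g (B τ * g τ) τ) (ha : f a = g a) :
    EqOn f g (Icc a b) :=
  let mulLeft : Matrix ι ι ℝ →L[ℝ] Matrix ι ι ℝ →L[ℝ] Matrix ι ι ℝ :=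
    LinearMap.toContinuousLinearMap
      (LinearMap.toContinuousLinearMap.toLinearMap ∘ₗ LinearMap.mul ℝ (Matrix ι ι ℝ))
  eqOn_Icc_of_hasDerivAt_clm (A := fun τ => mulLeft (B τ))
    (mulLeft.continuous.comp_continuousOn hB) hf hg ha

theorem HasDerivAt.matrix_mul_const {ι : Type*} [Fintype ι] {f : ℝ → Matrix ι ι ℝ}
    {f' : Matrix ι ι ℝ} {τ : ℝ} (hf : HasDerivAt f f' τ) (C : Matrix ι ι ℝ) :
    HasDerivAt (fun σ => f σ * C) (f' * C) τ :=
  (LinearMap.mulRight ℝ C).toContinuousLinearMap.hasFDerivAt.comp_hasDerivAt τ hf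

theorem Matrix.rank_neg {ι κ R : Type*} [Fintype κ] [Field R] (A : Matrix ι κ R) :
    (-A).rank = A.rank := by
  rw [← neg_one_smul R A]
  exact rank_smul_of_mem_nonZeroDivisors A isUnit_one.neg.mem_nonZeroDivisors

theorem Matrix.rank_mul_mul_transpose_of_isUnit_det {ι R : Type*} [Fintype ι] [DecidableEq ι]
    [Field R] {P : Matrix ι ι R} (hP : IsUnit P.det) (A : Matrix ι ι R) :
    (P * A * Pᵀ).rank = A.rank := by
  rw [rank_mul_eq_left_of_isUnit_det _ _ (by rwa [det_transpose]),
    rank_mul_eq_right_of_isUnit_det _ _ hP]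

theorem Matrix.mul_of_intervalIntegral_mul {ι : Type*} [Fintype ι]
    {a b : ℝ} {G : ℝ → Matrix ι ι ℝ} (hG : ∀ k l, IntervalIntegrable (fun τ => G τ k l) volume a b)
    (P Q : Matrix ι ι ℝ) :
    P * Matrix.of (fun i j => ∫ τ in a..b, G τ i j) * Q =
      Matrix.of fun i j => ∫ τ in a..b, (P * G τ * Q) i j := by
  ext i j
  have hPG : ∀ l, IntervalIntegrable (fun τ => ∑ k, P i k * G τ k l) volume a b := fun l => by
    simpa only [Finset.sum_fn] using
      IntervalIntegrable.sum Finset.univ fun k _ => (hG k l).const_mul (P i k)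
  simp only [mul_apply, of_apply]
  rw [intervalIntegral.integral_finsetSum fun l _ => (hPG l).mul_const (Q l j)]
  refine Finset.sum_congr rfl fun l _ => ?_
  rw [intervalIntegral.integral_mul_const, intervalIntegral.integral_finsetSum
    fun k _ => (hG k l).const_mul (P i k)]
  simp only [intervalIntegral.integral_const_mul]

theorem hasDerivAt_seg {m : ℕ} (a b : Fin m → ℝ) (τ : ℝ) : HasDerivAt (seg a b) (b - a) τ := by
  have h := ((hasDerivAt_id τ).smul_const (b - a)).const_add a
  rwa [one_smul] at h

theorem hasDerivAt_comp_seg {m n : ℕ} {M : Fin m → (Fin m → ℝ) → Matrix (Fin n) (Fin n) ℝ}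
    {F : (Fin m → ℝ) → Matrix (Fin n) (Fin n) ℝ} {a b : Fin m → ℝ} {τ : ℝ}
    (hF : DifferentiableAt ℝ F (seg a b τ))
    (hFM : ∀ α, fderiv ℝ F (seg a b τ) (Pi.single α 1) = M α (seg a b τ) * F (seg a b τ)) :
    HasDerivAt (fun σ => F (seg a b σ))
      ((∑ α, (b α - a α) • M α (seg a b τ)) * F (seg a b τ)) τ := by
  have hdir : fderiv ℝ F (seg a b τ) (b - a) =
      (∑ α, (b α - a α) • M α (seg a b τ)) * F (seg a b τ) := by
    conv_lhs => rw [pi_eq_sum_univ' (b - a)]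
    simp only [map_sum, map_smul, hFM, Finset.sum_mul, smul_mul_assoc, Pi.sub_apply]
  exact (hF.hasFDerivAt.comp_hasDerivAt τ (hasDerivAt_seg a b τ)).congr_deriv hdir

theorem seg_mem {m : ℕ} {D : Set (Fin m → ℝ)} (hconv : Convex ℝ D) {a b : Fin m → ℝ}
    (ha : a ∈ D) (hb : b ∈ D) {τ : ℝ} (hτ : τ ∈ Icc (0:ℝ) 1) : seg a b τ ∈ D := by
  simpa [seg, smul_sub, sub_smul, add_sub, add_comm] using
    hconv.add_smul_sub_mem ha hb hτ

theorem continuous_seg {m : ℕ} (a b : Fin m → ℝ) : Continuous (seg a b) := by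
  unfold seg; fun_prop

@[simp] theorem seg_zero {m : ℕ} (a b : Fin m → ℝ) : seg a b 0 = a := by simp [seg]

@[simp] theorem seg_one {m : ℕ} (a b : Fin m → ℝ) : seg a b 1 = b := by simp [seg]

theorem seg_one_sub {m : ℕ} (a b : Fin m → ℝ) (τ : ℝ) : seg b a (1 - τ) = seg a b τ := by
  ext j; simp only [seg, Pi.add_apply, Pi.smul_apply, Pi.sub_apply, smul_eq_mul]; ring

namespace IsFundamentalMatrix

variable {m n : ℕ} {D : Set (Fin m → ℝ)} {M : Fin m → (Fin m → ℝ) → Matrix (Fin n) (Fin n) ℝ}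
  {χ : (Fin m → ℝ) → (Fin m → ℝ) → Matrix (Fin n) (Fin n) ℝ}

theorem mul_eq (hχ : IsFundamentalMatrix D M χ) (hconv : Convex ℝ D)
    (hM : ∀ α, ContinuousOn (M α) D) {a b c : Fin m → ℝ} (ha : a ∈ D) (hb : b ∈ D) (hc : c ∈ D) :
    χ c b * χ b a = χ c a := by
  have hseg : MapsTo (seg b c) (Icc 0 1) D := fun τ hτ => seg_mem hconv hb hc hτ
  have hB : ContinuousOn (fun τ => ∑ α, (c α - b α) • M α (seg b c τ)) (Icc 0 1) :=
    continuousOn_finsetSum _ fun α _ =>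
      ((hM α).comp (continuous_seg b c).continuousOn hseg).const_smul (c α - b α)
  have hsol : ∀ x ∈ D, ∀ τ ∈ Icc (0:ℝ) 1, HasDerivAt (fun σ => χ (seg b c σ) x)
      ((∑ α, (c α - b α) • M α (seg b c τ)) * χ (seg b c τ) x) τ := fun x hx τ hτ =>
    hasDerivAt_comp_seg ((hχ x hx).2 _ (hseg hτ)).1 ((hχ x hx).2 _ (hseg hτ)).2
  have hEq := Matrix.eqOn_Icc_of_hasDerivAt_mul hB
    (fun τ hτ => by simpa only [Matrix.mul_assoc] using (hsol b hb τ hτ).matrix_mul_const (χ b a))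
    (hsol a ha) (by simp [(hχ b hb).1])
  simpa using hEq ⟨zero_le_one, le_rfl⟩

theorem mul_eq_one (hχ : IsFundamentalMatrix D M χ) (hconv : Convex ℝ D)
    (hM : ∀ α, ContinuousOn (M α) D) {a b : Fin m → ℝ} (ha : a ∈ D) (hb : b ∈ D) :
    χ a b * χ b a = 1 := by
  rw [hχ.mul_eq hconv hM ha hb ha, (hχ a ha).1]

theorem continuousOn_right (hχ : IsFundamentalMatrix D M χ) (hconv : Convex ℝ D)
    (hM : ∀ α, ContinuousOn (M α) D) {a : Fin m → ℝ} (ha : a ∈ D) :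
    ContinuousOn (χ a) D := by
  have hinv : EqOn (χ a) (fun s => (χ s a)⁻¹) D := fun s hs =>
    (Matrix.inv_eq_left_inv (hχ.mul_eq_one hconv hM ha hs)).symm
  refine ContinuousOn.congr (fun s hs => ?_) hinv
  have hdet : (χ s a).det ≠ 0 :=
    (Matrix.isUnit_det_of_left_inverse (hχ.mul_eq_one hconv hM ha hs)).ne_zero
  refine (continuousAt_matrix_inv _ ?_).comp_continuousWithinAt
    ((hχ a ha).2 s hs).1.continuousAt.continuousWithinAt
  simpa [Ring.inverse_eq_inv'] using continuousAt_inv₀ hdet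

end IsFundamentalMatrix

section Gramian

variable {m n k : ℕ} (χ : (Fin m → ℝ) → (Fin m → ℝ) → Matrix (Fin n) (Fin n) ℝ)
  (N : Fin m → (Fin m → ℝ) → Matrix (Fin n) (Fin k) ℝ)

def gramianIntegrand (w t₀ t : Fin m → ℝ) (τ : ℝ) : Matrix (Fin n) (Fin n) ℝ :=
  ∑ α, (t α - t₀ α) •
    (χ w (seg t₀ t τ) * N α (seg t₀ t τ) * (N α (seg t₀ t τ))ᵀ * (χ w (seg t₀ t τ))ᵀ)

theorem ctrlGramian_eq (t₀ t : Fin m → ℝ) :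
    ctrlGramian χ N t₀ t = of fun i j => ∫ τ in (0:ℝ)..1, gramianIntegrand χ N t₀ t₀ t τ i j := by
  ext i j
  simp [ctrlGramian, gramianIntegrand, Matrix.sum_apply]

theorem reachGramian_eq (t₀ t : Fin m → ℝ) :
    reachGramian χ N t₀ t = of fun i j => ∫ τ in (0:ℝ)..1, gramianIntegrand χ N t t₀ t τ i j := by
  ext i j
  simp [reachGramian, gramianIntegrand, Matrix.sum_apply]

theorem gramianIntegrand_one_sub (w t₀ t : Fin m → ℝ) (τ : ℝ) :
    gramianIntegrand χ N w t t₀ (1 - τ) = -gramianIntegrand χ N w t₀ t τ := by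
  simp only [gramianIntegrand, seg_one_sub, ← Finset.sum_neg_distrib, ← neg_smul, neg_sub]

theorem reachGramian_eq_neg_ctrlGramian (t₀ t : Fin m → ℝ) :
    reachGramian χ N t₀ t = -ctrlGramian χ N t t₀ := by
  ext i j
  have hflip := intervalIntegral.integral_comp_sub_left
    (fun τ => gramianIntegrand χ N t t t₀ τ i j) (a := 0) (b := 1) 1
  simp only [gramianIntegrand_one_sub, Matrix.neg_apply, intervalIntegral.integral_neg, sub_zero,
    sub_self] at hflip
  rw [reachGramian_eq, ctrlGramian_eq, Matrix.neg_apply, of_apply, of_apply, ← hflip, neg_neg]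

theorem mul_gramianIntegrand_mul_transpose {w w' t₀ t : Fin m → ℝ} {τ : ℝ}
    {P : Matrix (Fin n) (Fin n) ℝ} (hP : χ w' (seg t₀ t τ) = P * χ w (seg t₀ t τ)) :
    P * gramianIntegrand χ N w t₀ t τ * Pᵀ = gramianIntegrand χ N w' t₀ t τ := by
  simp only [gramianIntegrand, Matrix.mul_sum, Matrix.sum_mul, Matrix.mul_smul, Matrix.smul_mul,
    hP, transpose_mul, Matrix.mul_assoc]

theorem continuousOn_gramianIntegrand {D : Set (Fin m → ℝ)} (hconv : Convex ℝ D)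
    {w t₀ t : Fin m → ℝ} (h₀ : t₀ ∈ D) (ht : t ∈ D) (hχ : ContinuousOn (χ w) D)
    (hN : ∀ α, ContinuousOn (N α) D) :
    ContinuousOn (gramianIntegrand χ N w t₀ t) (Icc 0 1) := by
  have hseg : MapsTo (seg t₀ t) (Icc 0 1) D := fun τ hτ => seg_mem hconv h₀ ht hτ
  have hsandwich {A : ℝ → Matrix (Fin n) (Fin n) ℝ} {B : ℝ → Matrix (Fin n) (Fin k) ℝ}
      (hA : ContinuousOn A (Icc 0 1)) (hB : ContinuousOn B (Icc 0 1)) :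
      ContinuousOn (fun τ => A τ * B τ * (B τ)ᵀ * (A τ)ᵀ) (Icc 0 1) := by
    fun_prop
  exact continuousOn_finsetSum _ fun α _ =>
    (hsandwich (hχ.comp (continuous_seg t₀ t).continuousOn hseg)
      ((hN α).comp (continuous_seg t₀ t).continuousOn hseg)).const_smul (t α - t₀ α)

end Gramian

theorem IsFundamentalMatrix.mul_ctrlGramian_mul_transpose {m n k : ℕ} {D : Set (Fin m → ℝ)}
    {M : Fin m → (Fin m → ℝ) → Matrix (Fin n) (Fin n) ℝ}
    {χ : (Fin m → ℝ) → (Fin m → ℝ) → Matrix (Fin n) (Fin n) ℝ}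
    {N : Fin m → (Fin m → ℝ) → Matrix (Fin n) (Fin k) ℝ} (hχ : IsFundamentalMatrix D M χ)
    (hconv : Convex ℝ D) (hM : ∀ α, ContinuousOn (M α) D) (hN : ∀ α, ContinuousOn (N α) D)
    {t₀ t : Fin m → ℝ} (h₀ : t₀ ∈ D) (ht : t ∈ D) :
    χ t t₀ * ctrlGramian χ N t₀ t * (χ t t₀)ᵀ = reachGramian χ N t₀ t := by
  have hcont := continuousOn_gramianIntegrand χ N hconv h₀ ht (hχ.continuousOn_right hconv hM h₀) hN
  have hint : ∀ k l, IntervalIntegrable (fun τ => gramianIntegrand χ N t₀ t₀ t τ k l) volume 0 1 :=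
    fun k l => ((continuous_apply_apply k l).comp_continuousOn hcont).intervalIntegrable_of_Icc
      zero_le_one
  rw [ctrlGramian_eq, reachGramian_eq, Matrix.mul_of_intervalIntegral_mul hint]
  ext i j
  refine intervalIntegral.integral_congr fun τ hτ => ?_
  rw [uIcc_of_le zero_le_one] at hτ
  rw [mul_gramianIntegrand_mul_transpose χ N
    (hχ.mul_eq hconv hM (seg_mem hconv h₀ ht hτ) h₀ ht).symm]

theorem gramian_relations_general {m n k : ℕ} (D : Set (Fin m → ℝ))
    (hconv : Convex ℝ D)
    (M : Fin m → (Fin m → ℝ) → Matrix (Fin n) (Fin n) ℝ)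
    (hM : ∀ α, ContDiffOn ℝ 1 (M α) D)
    (N : Fin m → (Fin m → ℝ) → Matrix (Fin n) (Fin k) ℝ)
    (hN : ∀ α, ContDiffOn ℝ 1 (N α) D)
    (χ : (Fin m → ℝ) → (Fin m → ℝ) → Matrix (Fin n) (Fin n) ℝ)
    (hχ : IsFundamentalMatrix D M χ) :
    ∀ t₀ ∈ D, ∀ t ∈ D,
      reachGramian χ N t₀ t = -(ctrlGramian χ N t t₀) ∧
      χ t t₀ * ctrlGramian χ N t₀ t * (χ t t₀)ᵀ = -(ctrlGramian χ N t t₀) ∧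
      ((ctrlGramian χ N t₀ t).rank = (ctrlGramian χ N t t₀).rank ∧
        (ctrlGramian χ N t₀ t).rank = (reachGramian χ N t₀ t).rank ∧
        (ctrlGramian χ N t₀ t).rank = (reachGramian χ N t t₀).rank) := by
  intro t₀ h₀ t ht
  have hMc : ∀ α, ContinuousOn (M α) D := fun α => (hM α).continuousOn
  have hreach := reachGramian_eq_neg_ctrlGramian χ N t₀ t
  have hconj := hχ.mul_ctrlGramian_mul_transpose hconv hMc (fun α => (hN α).continuousOn) h₀ ht
  have hrank : (ctrlGramian χ N t₀ t).rank = (reachGramian χ N t₀ t).rank := by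
    rw [← hconj, rank_mul_mul_transpose_of_isUnit_det
      (isUnit_det_of_left_inverse (hχ.mul_eq_one hconv hMc h₀ ht))]
  refine ⟨hreach, hconj.trans hreach, ?_, hrank, ?_⟩
  · rw [hrank, hreach, rank_neg]
  · rw [reachGramian_eq_neg_ctrlGramian, rank_neg]

/-- Relations between the reachability and controllability gramians:
`ℛ(t₀,t) = −𝒞(t,t₀)` and `χ(t,t₀) 𝒞(t₀,t) χ(t,t₀)ᵀ = −𝒞(t,t₀)`; consequently
`𝒞(t₀,t)`, `𝒞(t,t₀)`, `ℛ(t₀,t)` and `ℛ(t,t₀)` all have the same rank. -/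
theorem gramian_relations {m n k : ℕ} (D : Set (Fin m → ℝ))
    (hD : IsOpen D) (hconv : Convex ℝ D)
    (M : Fin m → (Fin m → ℝ) → Matrix (Fin n) (Fin n) ℝ)
    (hM : ∀ α, ContDiffOn ℝ 1 (M α) D)
    (hMI : ∀ t ∈ D, ∀ α β,
      fderiv ℝ (M α) t (Pi.single β 1) + M α t * M β t =
      fderiv ℝ (M β) t (Pi.single α 1) + M β t * M α t)
    (N : Fin m → (Fin m → ℝ) → Matrix (Fin n) (Fin k) ℝ)
    (hN : ∀ α, ContDiffOn ℝ 1 (N α) D)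
    (hG : ∀ s ∈ D, ∀ α β,
      M α s * (N β s * (N β s)ᵀ) + fderiv ℝ (N α) s (Pi.single β 1) * (N α s)ᵀ
        + N α s * (fderiv ℝ (N α) s (Pi.single β 1))ᵀ
        + N β s * (N β s)ᵀ * (M α s)ᵀ =
      M β s * (N α s * (N α s)ᵀ) + fderiv ℝ (N β) s (Pi.single α 1) * (N β s)ᵀ
        + N β s * (fderiv ℝ (N β) s (Pi.single α 1))ᵀ
        + N α s * (N α s)ᵀ * (M β s)ᵀ)
    (χ : (Fin m → ℝ) → (Fin m → ℝ) → Matrix (Fin n) (Fin n) ℝ)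
    (hχ : IsFundamentalMatrix D M χ) :
    ∀ t₀ ∈ D, ∀ t ∈ D,
      reachGramian χ N t₀ t = -(ctrlGramian χ N t t₀) ∧
      χ t t₀ * ctrlGramian χ N t₀ t * (χ t t₀)ᵀ = -(ctrlGramian χ N t t₀) ∧
      ((ctrlGramian χ N t₀ t).rank = (ctrlGramian χ N t t₀).rank ∧
        (ctrlGramian χ N t₀ t).rank = (reachGramian χ N t₀ t).rank ∧
        (ctrlGramian χ N t₀ t).rank = (reachGramian χ N t t₀).rank) :=
  gramian_relations_general D hconv M hM N hN χ hχ
end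
end

section
/- For m = 3, n = 3, k = 1, with M₁ = M₂ = M₃ = M the cyclic permutation matrix (M e₁ = e₂, M e₂ = e₃, M e₃ = e₁) and N₁ = e₁, N₂ = e₂, N₃ = e₃, the control space of the system ∂x/∂t^α = M x + N_α u_α is {0}: the only C¹ functions u₁, u₂, u₃ : ℝ³ → ℝ satisfying M N_β u_β + N_α ∂u_α/∂t^β = M N_α u_α + N_β ∂u_β/∂t^α for all α, β are u₁ = u₂ = u₃ = 0. -/
open Matrix

/-- For the autonomous system on `ℝ³` with `M` the cyclic permutation matrix
(`M e₁ = e₂`, `M e₂ = e₃`, `M e₃ = e₁`) and `N_α = e_α`, the control space of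
`∂x/∂t^α = M x + N_α u_α` is `{0}`: the only `C¹` controls are `u₁ = u₂ = u₃ = 0`. -/
theorem cyclic_system_control_space_trivial
    (M : Matrix (Fin 3) (Fin 3) ℝ)
    (hM : M = !![0, 0, 1; 1, 0, 0; 0, 1, 0])
    (N : Fin 3 → (Fin 3 → ℝ)) (hN : ∀ α, N α = Pi.single α 1)
    (u : Fin 3 → (Fin 3 → ℝ) → ℝ)
    (hu : ∀ α, ContDiff ℝ 1 (u α))
    (hctrl : ∀ t : Fin 3 → ℝ, ∀ α β : Fin 3,
      u β t • (M *ᵥ N β) + (fderiv ℝ (u α) t (Pi.single β 1)) • N α =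
      u α t • (M *ᵥ N α) + (fderiv ℝ (u β) t (Pi.single α 1)) • N β) :
    ∀ α, ∀ t : Fin 3 → ℝ, u α t = 0 := by
  intro α t
  fin_cases α
  · have h := congrFun (hctrl t 2 0) 1
    simpa [hM, hN, Matrix.mulVec, Pi.single_apply, Fin.sum_univ_three,
      dotProduct, vecHead, vecTail] using h
  · have h := congrFun (hctrl t 0 1) 2
    simpa [hM, hN, Matrix.mulVec, Pi.single_apply, Fin.sum_univ_three,
      dotProduct, vecHead, vecTail] using h
  · have h := congrFun (hctrl t 1 2) 0
    simpa [hM, hN, Matrix.mulVec, Pi.single_apply, Fin.sum_univ_three,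
      dotProduct, vecHead, vecTail] using h
end
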